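/- Let a > -1, b ∈ (0,1) ∪ (1,2), b ≠ 1. For fixed 0 ≤ r < v ≤ s < t, the quadruple covariance functional Q(r,v,s+T,t+T) := Q_{a,b}(t+T,v) - Q_{a,b}(t+T,r) - Q_{a,b}(s+T,v) + Q_{a,b}(s+T,r) satisfies lim_{T→∞} T^{2-b} Q(r,v,s+T,t+T) = (b/((a+1)(a+2))) (t-s)(v^{a+2} - r^{a+2}). -/

import Mathlib

open MeasureTheory intervalIntegral Real Filter

/-- The weighted sub-fractional kernel `Q_{a,b}`. -/
noncomputable def Q (a b w z : ℝ) : ℝ :=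
  (1 / (1 - b)) * ∫ s in (0:ℝ)..(min w z),
    s ^ a * ((z - s) ^ b + (w - s) ^ b - (w + z - 2 * s) ^ b)

/-- Positive semidefiniteness of a kernel on `[0,∞)²`. -/
def PosSemidef (K : ℝ → ℝ → ℝ) : Prop :=
  ∀ (n : ℕ) (t : Fin n → ℝ), (∀ i, 0 ≤ t i) → ∀ c : Fin n → ℝ,
    0 ≤ ∑ i, ∑ j, c i * c j * K (t i) (t j)

/-- The real Beta function as an integral. -/
noncomputable def Beta (x y : ℝ) : ℝ :=
  ∫ u in (0:ℝ)..1, u ^ (x - 1) * (1 - u) ^ (y - 1)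



lemma aux_int {a : ℝ} (ha : -1 < a) {g : ℝ → ℝ} (hg : Continuous g) (z : ℝ) :
    IntervalIntegrable (fun u => u ^ a * g u) volume 0 z :=
  (intervalIntegral.intervalIntegrable_rpow' ha).mul_continuousOn hg.continuousOn

lemma cont_rpow {b : ℝ} (hb : 0 ≤ b) {f : ℝ → ℝ} (hf : Continuous f) :
    Continuous (fun u => f u ^ b) :=
  hf.rpow_const (fun _ => Or.inr hb)

lemma J_eval {a : ℝ} (ha : -1 < a) {z : ℝ} (hz : 0 ≤ z) :
    ∫ u in (0:ℝ)..z, u ^ a * (z - u) = z ^ (a+2) / ((a+1)*(a+2)) := by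
  have ha1 : (0:ℝ) < a + 1 := by linarith
  have ha2 : (0:ℝ) < a + 2 := by linarith
  have h1 : ∫ u in (0:ℝ)..z, u ^ a * (z - u)
      = ∫ u in (0:ℝ)..z, (z * u ^ a - u ^ (a+1)) := by
    apply intervalIntegral.integral_congr_ae
    apply MeasureTheory.ae_of_all
    intro u hu
    have hu0 : 0 < u := by
      rcases Set.mem_uIoc.mp hu with h | h
      · exact h.1
      · exact absurd h.2 (not_le.mpr (hz.trans_lt h.1))
    rw [rpow_add_one hu0.ne' a]
    ring
  have h2 : z ^ (a+2) = z * z ^ (a+1) := by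
    rcases eq_or_lt_of_le hz with rfl | hz'
    · rw [Real.zero_rpow ha2.ne', Real.zero_rpow ha1.ne']; ring
    · rw [show a+2 = (a+1)+1 by ring, rpow_add_one hz'.ne']; ring
  rw [h1, intervalIntegral.integral_sub
    ((intervalIntegral.intervalIntegrable_rpow' ha).const_mul z)
    (intervalIntegral.intervalIntegrable_rpow' (by linarith : (-1:ℝ) < a+1)),
    intervalIntegral.integral_const_mul,
    integral_rpow (Or.inl ha), integral_rpow (Or.inl (by linarith : (-1:ℝ) < a+1)),
    show a+1+1 = a+2 by ring, Real.zero_rpow ha1.ne', Real.zero_rpow ha2.ne', h2]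
  field_simp
  ring

lemma tendsto_aux (b c : ℝ) :
    Tendsto (fun T : ℝ => T ^ (2-b) * (c + T) ^ (b-2)) atTop (nhds 1) := by
  have h : ∀ᶠ T in atTop, T ^ (2-b) * (c+T) ^ (b-2) = (1 + c/T) ^ (b-2) := by
    filter_upwards [eventually_gt_atTop 0, eventually_gt_atTop (-c)] with T hT hT'
    have h1 : (0:ℝ) < c + T := by linarith
    have h2 : (1 + c/T) = (c+T)/T := by field_simp; ring
    rw [h2, Real.div_rpow h1.le hT.le]
    have h3 : T ^ (2-b) = (T ^ (b-2))⁻¹ := by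
      rw [← Real.rpow_neg hT.le]; norm_num
    rw [h3]
    field_simp
  have h2 : Tendsto (fun T : ℝ => (1 + c/T) ^ (b-2)) atTop (nhds 1) := by
    have hdiv : Tendsto (fun T : ℝ => c/T) atTop (nhds 0) :=
      tendsto_const_nhds.div_atTop tendsto_id
    have hbase : Tendsto (fun T : ℝ => 1 + c/T) atTop (nhds 1) := by
      simpa using tendsto_const_nhds.add hdiv
    have hc : ContinuousAt (fun x : ℝ => x ^ (b-2)) 1 :=
      Real.continuousAt_rpow_const 1 (b-2) (Or.inl one_ne_zero)
    simpa [Function.comp_def] using hc.tendsto.comp hbase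
  exact Tendsto.congr' (h.mono fun T hT => hT.symm) h2

noncomputable def Dfun (b s t z u T : ℝ) : ℝ :=
  (t+T-u)^b - (s+T-u)^b - (t+T+z-2*u)^b + (s+T+z-2*u)^b

lemma exists_xi {b s t : ℝ} (hb0 : 0 < b) (hst : s < t) {z u T : ℝ}
    (hu : 0 ≤ u) (huz : u ≤ z) (hzs : z ≤ s) (hT : 0 < T) :
    ∃ ξ, T ≤ ξ ∧ ξ ≤ t+T+z ∧
      Dfun b s t z u T = -(b*(b-1)*(t-s)*(z-u)*ξ^(b-2)) := by
  have hz0 : 0 ≤ z := hu.trans huz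
  have hs0 : 0 ≤ s := hz0.trans hzs
  have ht0 : 0 < t := lt_of_le_of_lt hs0 hst
  rcases eq_or_lt_of_le huz with rfl | hulz
  · refine ⟨T, le_refl _, by linarith, ?_⟩
    unfold Dfun
    rw [show t+T+u-2*u = t+T-u by ring, show s+T+u-2*u = s+T-u by ring]
    ring
  · obtain ⟨ξ₁, hξ₁, hsl⟩ := exists_hasDerivAt_eq_slope
      (fun x => (t+x)^b - (s+x)^b)
      (fun x => b*(t+x)^(b-1) - b*(s+x)^(b-1))
      (show T - u < T + z - 2*u by linarith)
      (((cont_rpow hb0.le (continuous_const.add continuous_id)).sub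
        (cont_rpow hb0.le (continuous_const.add continuous_id))).continuousOn)
      (by
        intro x hx
        have hx1 : T - u < x := hx.1
        have hsx : 0 < s + x := by linarith
        have htx : 0 < t + x := by linarith
        have d1 : HasDerivAt (fun x : ℝ => (t+x)^b) (b*(t+x)^(b-1)) x := by
          have := (Real.hasDerivAt_rpow_const (x := t+x) (p := b)
            (Or.inl htx.ne')).comp x ((hasDerivAt_id x).const_add t)
          simpa [Function.comp_def] using this
        have d2 : HasDerivAt (fun x : ℝ => (s+x)^b) (b*(s+x)^(b-1)) x := by
          have := (Real.hasDerivAt_rpow_const (x := s+x) (p := b)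
            (Or.inl hsx.ne')).comp x ((hasDerivAt_id x).const_add s)
          simpa [Function.comp_def] using this
        exact d1.sub d2)
    have hξ₁pos : T - u < ξ₁ := hξ₁.1
    have hξ₁up : ξ₁ < T + z - 2*u := hξ₁.2
    have key1 : ((t+(T+z-2*u))^b - (s+(T+z-2*u))^b) - ((t+(T-u))^b - (s+(T-u))^b)
        = (b*(t+ξ₁)^(b-1) - b*(s+ξ₁)^(b-1)) * (z-u) := by
      have hzu : z - u ≠ 0 := sub_ne_zero_of_ne hulz.ne'
      rw [show T + z - 2*u - (T - u) = z - u by ring] at hsl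
      rw [hsl]
      exact (div_mul_cancel₀ _ hzu).symm
    obtain ⟨η, hη, hsl2⟩ := exists_hasDerivAt_eq_slope
      (fun y => (y+ξ₁)^(b-1))
      (fun y => (b-1)*(y+ξ₁)^(b-2)) hst
      (by
        apply ContinuousOn.rpow_const (Continuous.continuousOn (continuous_id.add continuous_const))
        intro y hy
        have : 0 < y + ξ₁ := by have := hy.1; linarith
        exact Or.inl this.ne')
      (by
        intro y hy
        have hgy : 0 < y + ξ₁ := by have := hy.1; linarith
        have := (Real.hasDerivAt_rpow_const (x := y+ξ₁) (p := b-1)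
          (Or.inl hgy.ne')).comp y ((hasDerivAt_id y).add_const ξ₁)
        simpa [Function.comp_def, show b-1-1 = b-2 by ring] using this)
    have key2 : (t+ξ₁)^(b-1) - (s+ξ₁)^(b-1) = (b-1)*(η+ξ₁)^(b-2) * (t-s) := by
      have hts : t - s ≠ 0 := sub_ne_zero_of_ne hst.ne'
      rw [hsl2]
      exact (div_mul_cancel₀ _ hts).symm
    refine ⟨η + ξ₁, by linarith [hη.1], by linarith [hη.2, hu], ?_⟩
    have hD : Dfun b s t z u T
        = ((t+(T-u))^b - (s+(T-u))^b) - ((t+(T+z-2*u))^b - (s+(T+z-2*u))^b) := by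
      unfold Dfun
      rw [show t+(T-u) = t+T-u by ring, show s+(T-u) = s+T-u by ring,
        show t+(T+z-2*u) = t+T+z-2*u by ring, show s+(T+z-2*u) = s+T+z-2*u by ring]
      ring
    rw [hD]
    linear_combination -key1 - b*(z-u)*key2

lemma cont_Dfun {b : ℝ} (hb : 0 ≤ b) (s t z T : ℝ) :
    Continuous (fun u => Dfun b s t z u T) := by
  unfold Dfun
  exact (((cont_rpow hb (continuous_const.sub continuous_id)).sub
    (cont_rpow hb (continuous_const.sub continuous_id))).sub
    (cont_rpow hb (continuous_const.sub (continuous_const.mul continuous_id)))).add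
    (cont_rpow hb (continuous_const.sub (continuous_const.mul continuous_id)))

lemma limit_z (a b s t : ℝ) (ha : -1 < a) (hb0 : 0 < b) (hb2 : b < 2)
    (hst : s < t) {z : ℝ} (hz : 0 ≤ z) (hzs : z ≤ s) :
    Tendsto (fun T : ℝ => T^(2-b) * ∫ u in (0:ℝ)..z, u^a * Dfun b s t z u T) atTop
      (nhds (-(b*(b-1)*(t-s)) * (z^(a+2)/((a+1)*(a+2))))) := by
  set K := b*(b-1)*(t-s) with hKdef
  set J := z^(a+2)/((a+1)*(a+2)) with hJdef
  have hJ0 : 0 ≤ J := by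
    apply div_nonneg (Real.rpow_nonneg hz _)
    nlinarith
  clear_value K J
  rw [tendsto_iff_dist_tendsto_zero]
  apply squeeze_zero' (Eventually.of_forall fun T => dist_nonneg)
    (g := fun T => |K| * J * (1 - T^(2-b)*(t+T+z)^(b-2)))
  · filter_upwards [eventually_gt_atTop 0] with T hT
    have hT2b : (0:ℝ) < T^(2-b) := Real.rpow_pos_of_pos hT _
    have hTb : T^(2-b)*T^(b-2) = 1 := by
      rw [← Real.rpow_add hT]; norm_num
    set cT := (t+T+z)^(b-2) with hcT
    clear_value cT
    -- pointwise bound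
    have hpt : ∀ u ∈ Set.Icc (0:ℝ) z,
        |u^a * Dfun b s t z u T + K*T^(b-2) * (u^a*(z-u))|
        ≤ u^a * (|K| * ((z-u)*(T^(b-2) - cT))) := by
      intro u hu
      obtain ⟨ξ, hξ1, hξ2, hEq⟩ := exists_xi hb0 hst hu.1 hu.2 hzs hT
      have hua : 0 ≤ u^a := Real.rpow_nonneg hu.1 a
      have h1 : ξ^(b-2) ≤ T^(b-2) :=
        Real.rpow_le_rpow_of_nonpos hT hξ1 (by linarith)
      have h2 : cT ≤ ξ^(b-2) := by
        rw [hcT]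
        exact Real.rpow_le_rpow_of_nonpos (hT.trans_le hξ1) hξ2 (by linarith)
      have hzu : 0 ≤ z - u := by linarith [hu.2]
      have hre : u^a * Dfun b s t z u T + K*T^(b-2) * (u^a*(z-u))
          = u^a * ((K*(z-u))*(T^(b-2) - ξ^(b-2))) := by
        rw [hEq, hKdef]; ring
      rw [hre, abs_mul, abs_of_nonneg hua]
      gcongr u^a * ?_
      rw [abs_mul, abs_mul, abs_of_nonneg hzu, abs_of_nonneg (sub_nonneg.mpr h1)]
      rw [show |K| * ((z-u)*(T^(b-2)-cT)) = |K| * (z-u)*(T^(b-2)-cT) by ring]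
      gcongr
    -- integrability
    have hcz : Continuous (fun u : ℝ => z - u) := continuous_const.sub continuous_id
    have int1 : IntervalIntegrable (fun u => u^a * Dfun b s t z u T) volume 0 z :=
      aux_int ha (cont_Dfun hb0.le s t z T) z
    have int2 : IntervalIntegrable (fun u => u^a * (z-u)) volume 0 z := aux_int ha hcz z
    have intF : IntervalIntegrable
        (fun u => u^a * Dfun b s t z u T + K*T^(b-2) * (u^a*(z-u))) volume 0 z :=
      int1.add (int2.const_mul _)
    have intB : IntervalIntegrable
        (fun u => u^a * (|K| * ((z-u)*(T^(b-2) - cT)))) volume 0 z :=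
      aux_int ha (by continuity) z
    -- integral computations
    have hJint : ∫ u in (0:ℝ)..z, u^a * (z-u) = J := by
      rw [hJdef]; exact J_eval ha hz
    have e2 : ∫ u in (0:ℝ)..z, (u^a * Dfun b s t z u T + K*T^(b-2) * (u^a*(z-u)))
        = (∫ u in (0:ℝ)..z, u^a * Dfun b s t z u T) + K*T^(b-2)*J := by
      rw [intervalIntegral.integral_add int1 (int2.const_mul _),
        intervalIntegral.integral_const_mul, hJint]
    have e3 : ∫ u in (0:ℝ)..z, u^a * (|K| * ((z-u)*(T^(b-2) - cT)))
        = |K| * (T^(b-2)-cT)*J := by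
      rw [show (fun u => u^a * (|K| * ((z-u)*(T^(b-2) - cT))))
          = (fun u => (|K| * (T^(b-2)-cT)) * (u^a*(z-u))) by funext u; ring]
      rw [intervalIntegral.integral_const_mul, hJint]
    have e4 : |(∫ u in (0:ℝ)..z, u^a * Dfun b s t z u T) + K*T^(b-2)*J|
        ≤ |K| * (T^(b-2)-cT)*J := by
      rw [← e2]
      calc |∫ u in (0:ℝ)..z, (u^a * Dfun b s t z u T + K*T^(b-2) * (u^a*(z-u)))|
          ≤ ∫ u in (0:ℝ)..z, |u^a * Dfun b s t z u T + K*T^(b-2) * (u^a*(z-u))| :=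
            intervalIntegral.abs_integral_le_integral_abs hz
        _ ≤ ∫ u in (0:ℝ)..z, u^a * (|K| * ((z-u)*(T^(b-2) - cT))) :=
            intervalIntegral.integral_mono_on hz intF.abs intB hpt
        _ = |K| * (T^(b-2)-cT)*J := e3
    rw [Real.dist_eq]
    have hre2 : T^(2-b) * (∫ u in (0:ℝ)..z, u^a * Dfun b s t z u T) - (-K) * J
        = T^(2-b) * ((∫ u in (0:ℝ)..z, u^a * Dfun b s t z u T) + K*T^(b-2)*J) := by
      linear_combination (-(K*J))*hTb
    rw [hre2, abs_mul, abs_of_pos hT2b]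
    calc T^(2-b) * |(∫ u in (0:ℝ)..z, u^a * Dfun b s t z u T) + K*T^(b-2)*J|
        ≤ T^(2-b) * (|K| * (T^(b-2)-cT)*J) := by gcongr
      _ = |K| * J * (1 - T^(2-b)*cT) := by linear_combination (|K| * J)*hTb
  · have h1 : Tendsto (fun T : ℝ => T^(2-b)*(t+T+z)^(b-2)) atTop (nhds 1) :=
      (tendsto_aux b (t+z)).congr (fun T => by rw [show t+z+T = t+T+z by ring])
    have := (tendsto_const_nhds (x := (1:ℝ)) (f := atTop)).sub h1
    have := this.const_mul (|K| * J)
    simpa using this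


theorem stmt15 (a b : ℝ) (ha : -1 < a)
    (hb : (0 < b ∧ b < 1) ∨ (1 < b ∧ b < 2))
    (r v s t : ℝ) (hr : 0 ≤ r) (hrv : r < v) (hvs : v ≤ s) (hst : s < t) :
    Tendsto (fun T : ℝ =>
        T ^ (2 - b) * (Q a b (t + T) v - Q a b (t + T) r - Q a b (s + T) v + Q a b (s + T) r))
      atTop
      (nhds ((b / ((a + 1) * (a + 2))) * (t - s) * (v ^ (a + 2) - r ^ (a + 2)))) := by
  obtain ⟨hb0, hb2, hb1⟩ : 0 < b ∧ b < 2 ∧ b ≠ 1 := by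
    rcases hb with ⟨h1, h2⟩ | ⟨h1, h2⟩
    · exact ⟨h1, by linarith, by intro h; linarith [h]⟩
    · exact ⟨by linarith, h2, by intro h; linarith [h]⟩
  have hv0 : 0 ≤ v := hr.trans hrv.le
  have hs0 : 0 ≤ s := hv0.trans hvs
  have hrs : r ≤ s := by linarith
  have hlv := limit_z a b s t ha hb0 hb2 hst hv0 hvs
  have hlr := limit_z a b s t ha hb0 hb2 hst hr hrs
  have hlim := (hlv.sub hlr).const_mul (1/(1-b))
  have h1b : (1:ℝ) - b ≠ 0 := by intro h; apply hb1; linarith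
  have hCval : (1/(1-b)) * ((-(b*(b-1)*(t-s)) * (v^(a+2)/((a+1)*(a+2))))
        - (-(b*(b-1)*(t-s)) * (r^(a+2)/((a+1)*(a+2)))))
      = (b / ((a+1)*(a+2))) * (t-s) * (v^(a+2) - r^(a+2)) := by
    have h2 : a + 1 ≠ 0 := by linarith
    have h3 : a + 2 ≠ 0 := by linarith
    field_simp
    ring
  rw [← hCval]
  apply Tendsto.congr' _ hlim
  have c1 : ∀ c : ℝ, Continuous (fun u : ℝ => (c - u)^b) :=
    fun c => cont_rpow hb0.le (continuous_const.sub continuous_id)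
  have c2 : ∀ c : ℝ, Continuous (fun u : ℝ => (c - 2*u)^b) :=
    fun c => cont_rpow hb0.le (continuous_const.sub (continuous_const.mul continuous_id))
  filter_upwards [eventually_gt_atTop 0] with T hT
  have hmin1 : min (t+T) v = v := min_eq_right (by linarith)
  have hmin2 : min (t+T) r = r := min_eq_right (by linarith)
  have hmin3 : min (s+T) v = v := min_eq_right (by linarith)
  have hmin4 : min (s+T) r = r := min_eq_right (by linarith)
  have hid : ∀ z : ℝ,
      (∫ u in (0:ℝ)..z, u^a * ((z-u)^b + (t+T-u)^b - (t+T+z-2*u)^b))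
      - (∫ u in (0:ℝ)..z, u^a * ((z-u)^b + (s+T-u)^b - (s+T+z-2*u)^b))
      = ∫ u in (0:ℝ)..z, u^a * Dfun b s t z u T := by
    intro z
    rw [← intervalIntegral.integral_sub
      (aux_int ha (g := fun u => (z-u)^b + (t+T-u)^b - (t+T+z-2*u)^b) (((c1 z).add (c1 (t+T))).sub (c2 (t+T+z))) z)
      (aux_int ha (g := fun u => (z-u)^b + (s+T-u)^b - (s+T+z-2*u)^b) (((c1 z).add (c1 (s+T))).sub (c2 (s+T+z))) z)]
    apply intervalIntegral.integral_congr
    intro u _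
    unfold Dfun
    ring
  have hv_id := hid v
  have hr_id := hid r
  simp only [Q, hmin1, hmin2, hmin3, hmin4]
  linear_combination (-(T^(2-b)/(1-b))) * hv_id + (T^(2-b)/(1-b)) * hr_id
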